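/- Every homeomorphism of the circle has zero topological entropy: if f is a homeomorphism of the circle ℝ/ℤ (equivalently, of the unit circle in ℂ), then the topological entropy of f (the cover entropy of f over the whole space) equals 0. -/

import Mathlib

/-!
Cut the circle at the `k` grid points `j / k`: a preconnected set avoiding them has diameter
`< 1 / k`. The at most `k n` preimages of grid points under `T^[i]`, `i < n`, cut the circle into at
most `k n + 1` arcs, and the first `n` images of each arc are preconnected and avoid the grid, so
every arc is `(n, 1 / k)`-small. Since `T` is injective, this gives `(n, 1 / k)`-covers of size
linear in `n`, whose exponential growth rate is `0`.
-/

open Set Function Filter ExpGrowth Dynamics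
open scoped ENNReal SetRel

namespace ExpGrowth

lemma expGrowthSup_natCast : expGrowthSup (fun n : ℕ ↦ (n : ℝ≥0∞)) = 0 := by
  have hmono : Monotone (fun n : ℕ ↦ (n : ℝ≥0∞)) := fun m n h ↦ Nat.cast_le.2 h
  have hnonneg := hmono.expGrowthSup_nonneg (fun h ↦ by simpa using congrFun h 1)
  have hlt_top : expGrowthSup (fun n : ℕ ↦ (n : ℝ≥0∞)) < ⊤ := by
    refine lt_of_le_of_lt (b := ENNReal.log 2) ?_ (by simp)
    rw [← expGrowthSup_pow]
    exact expGrowthSup_monotone fun n ↦ by exact_mod_cast n.lt_two_pow_self.le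
  -- `n ↦ 2n` doubles the growth rate but changes the sequence only by the factor `2`
  have hdouble :
      2 * expGrowthSup (fun n : ℕ ↦ (n : ℝ≥0∞)) ≤ expGrowthSup (fun n : ℕ ↦ (n : ℝ≥0∞)) := by
    rw [← Nat.cast_two, ← hmono.expGrowthSup_comp_mul two_ne_zero]
    exact expGrowthSup_le_of_eventually_le (b := 2) ENNReal.ofNat_ne_top
      (Eventually.of_forall fun n ↦ by push_cast; rfl)
  generalize expGrowthSup (fun n : ℕ ↦ (n : ℝ≥0∞)) = a at *
  induction a using EReal.rec with
  | bot => simp at hnonneg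
  | top => simp at hlt_top
  | coe r =>
    have h2 : ((2 * r : ℝ) : EReal) ≤ r := hdouble
    exact_mod_cast
      le_antisymm (by linarith [EReal.coe_le_coe_iff.1 h2]) (EReal.coe_nonneg.1 hnonneg)

end ExpGrowth

namespace SetRel

variable {X : Type*} {V : SetRel X X}

lemma exists_finset_isCover_univ_of_fibers [V.IsRefl] (A : Finset X) (g : X → ℕ) {m : ℕ}
    (hg : ∀ x ∉ A, g x < m) (hV : ∀ x y, x ∉ A → y ∉ A → g x = g y → x ~[V] y) :
    ∃ s : Finset X, IsCover V univ s ∧ s.card ≤ A.card + m := by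
  classical
  rcases isEmpty_or_nonempty X with hX | hX
  · exact ⟨∅, fun x ↦ isEmptyElim x, by simp⟩
  let r : ℕ → X := invFunOn g (↑A)ᶜ
  refine ⟨A ∪ (Finset.range m).image r, fun x _ ↦ ?_, ?_⟩
  · by_cases hx : x ∈ A
    · exact ⟨x, by simp [hx], V.rfl⟩
    · have hex : ∃ y ∈ (↑A : Set X)ᶜ, g y = g x := ⟨x, hx, rfl⟩
      have hr : r (g x) ∈ (Finset.range m).image r :=
        Finset.mem_image_of_mem r (Finset.mem_range.2 (hg x hx))
      exact ⟨r (g x), Finset.mem_union_right _ hr,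
        hV _ _ hx (invFunOn_mem hex) (invFunOn_eq hex).symm⟩
  · calc (A ∪ (Finset.range m).image r).card
        ≤ A.card + ((Finset.range m).image r).card := Finset.card_union_le _ _
      _ ≤ A.card + m := by grw [Finset.card_image_le, Finset.card_range]

end SetRel

namespace Dynamics

variable {X : Type*} {T : X → X} {U : SetRel X X} {F : Set X}

lemma coverEntropyEntourage_nonpos_of_coverMincard_le {a b : ℕ}
    (h : ∀ n, coverMincard T F U n ≤ a * n + b) : coverEntropyEntourage T F U ≤ 0 := by
  rw [← expGrowthSup_natCast]
  refine expGrowthSup_le_of_eventually_le (b := a + b) (by simp) ?_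
  filter_upwards [eventually_ge_atTop 1] with n hn
  have hb : (b : ℝ≥0∞) ≤ b * n := le_mul_of_one_le_right' (by exact_mod_cast hn)
  calc (coverMincard T F U n : ℝ≥0∞) ≤ a * n + b := by exact_mod_cast ENat.toENNReal_le.2 (h n)
    _ ≤ (a + b) * n := by rw [add_mul]; gcongr

lemma prod_subset_dynEntourage_of_isPreconnected [TopologicalSpace X] (hT : Continuous T)
    {D : Set X} (hD : ∀ C, IsPreconnected C → Disjoint C D → C ×ˢ C ⊆ U) {n : ℕ} {C : Set X}
    (hC : IsPreconnected C) (hCD : ∀ i < n, Disjoint C (T^[i] ⁻¹' D)) :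
    C ×ˢ C ⊆ dynEntourage T U n := by
  rintro ⟨x, y⟩ ⟨hx, hy⟩
  rw [mem_dynEntourage]
  intro i hi
  exact hD _ (hC.image _ (hT.iterate i).continuousOn) (disjoint_image_left.2 (hCD i hi))
    ⟨mem_image_of_mem _ hx, mem_image_of_mem _ hy⟩

end Dynamics

namespace AddCircle

lemma dist_coe_le_abs_sub (p a b : ℝ) : dist (a : AddCircle p) b ≤ |a - b| := by
  rw [dist_eq_norm, ← coe_sub]
  exact QuotientAddGroup.norm_mk_le_norm

end AddCircle

namespace UnitAddCircle

noncomputable def rep (x : UnitAddCircle) : ℝ := AddCircle.equivIco 1 0 x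

lemma rep_mem_Ico (x : UnitAddCircle) : rep x ∈ Ico (0 : ℝ) 1 := by
  simpa only [rep, zero_add] using (AddCircle.equivIco 1 0 x).2

lemma coe_rep (x : UnitAddCircle) : (rep x : UnitAddCircle) = x :=
  AddCircle.coe_equivIco

lemma rep_coe {t : ℝ} (ht : t ∈ Ico (0 : ℝ) 1) : rep t = t :=
  AddCircle.equivIco_coe_of_mem (by rwa [zero_add])

lemma continuousAt_rep {x : UnitAddCircle} (hx : x ≠ 0) : ContinuousAt rep x :=
  continuous_subtype_val.continuousAt.comp (AddCircle.continuousAt_equivIco 1 0 hx)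

noncomputable def gridPoints (k : ℕ) : Finset UnitAddCircle :=
  (Finset.range k).image fun j : ℕ ↦ ((j / k : ℝ) : UnitAddCircle)

lemma dist_lt_of_isPreconnected {k : ℕ} (hk : 0 < k) {C : Set UnitAddCircle}
    (hC : IsPreconnected C) (hCk : Disjoint C (gridPoints k)) {x y : UnitAddCircle}
    (hx : x ∈ C) (hy : y ∈ C) : dist x y < 1 / k := by
  wlog hxy : rep x ≤ rep y generalizing x y
  · rw [dist_comm]
    exact this hy hx (le_of_not_ge hxy)
  have hgrid {j : ℕ} (hj : j < k) : ((j / k : ℝ) : UnitAddCircle) ∉ C := fun h ↦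
    disjoint_left.1 hCk h (Finset.mem_image_of_mem _ (Finset.mem_range.2 hj))
  have hrep : IsPreconnected (rep '' C) := by
    refine hC.image _ fun z hz ↦ (continuousAt_rep ?_).continuousWithinAt
    rintro rfl
    exact hgrid hk (by simpa using hz)
  have hkR : (0 : ℝ) < k := Nat.cast_pos.2 hk
  -- otherwise `⌈k * rep x⌉₊ / k` is a grid point in `[rep x, rep y]`
  have hgap : rep y - rep x < 1 / k := by
    by_contra! hge
    set j := ⌈k * rep x⌉₊
    have hj₁ : rep x ≤ j / k := by rw [le_div_iff₀ hkR, mul_comm]; exact Nat.le_ceil _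
    have hj₂ : (j : ℝ) / k < rep y := by
      have := Nat.ceil_lt_add_one (mul_nonneg hkR.le (rep_mem_Ico x).1)
      rw [div_lt_iff₀ hkR]
      rw [le_sub_iff_add_le, div_add' _ _ _ hkR.ne', div_le_iff₀ hkR] at hge
      linarith
    have hjk : j < k := by
      have := hj₂.trans (rep_mem_Ico y).2
      rwa [div_lt_one hkR, Nat.cast_lt] at this
    obtain ⟨c, hc, hcj⟩ := hrep.Icc_subset (mem_image_of_mem _ hx) (mem_image_of_mem _ hy)
      ⟨hj₁, hj₂.le⟩
    exact hgrid hjk (hcj ▸ (coe_rep c).symm ▸ hc)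
  calc dist x y = dist (rep x : UnitAddCircle) (rep y) := by rw [coe_rep, coe_rep]
    _ ≤ |rep x - rep y| := AddCircle.dist_coe_le_abs_sub _ _ _
    _ < 1 / k := by rwa [abs_sub_comm, abs_of_nonneg (sub_nonneg.2 hxy)]

noncomputable def gapIndex (S : Finset UnitAddCircle) (x : UnitAddCircle) : ℕ :=
  (S.filter fun s ↦ rep s < rep x).card

lemma gapIndex_lt (S : Finset UnitAddCircle) (x : UnitAddCircle) : gapIndex S x < S.card + 1 :=
  Nat.lt_succ_of_le (Finset.card_filter_le _ _)

lemma exists_isPreconnected_of_gapIndex_eq {S : Finset UnitAddCircle} {x y : UnitAddCircle}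
    (hx : x ∉ S) (hy : y ∉ S) (h : gapIndex S x = gapIndex S y) :
    ∃ C, IsPreconnected C ∧ x ∈ C ∧ y ∈ C ∧ Disjoint C S := by
  wlog hxy : rep x ≤ rep y generalizing x y
  · obtain ⟨C, hC, hyC, hxC, hCS⟩ := this hy hx h.symm (le_of_not_ge hxy)
    exact ⟨C, hC, hxC, hyC, hCS⟩
  refine ⟨(↑) '' Icc (rep x) (rep y),
    isPreconnected_Icc.image _ continuous_quotient_mk'.continuousOn,
    ⟨rep x, left_mem_Icc.2 hxy, coe_rep x⟩, ⟨rep y, right_mem_Icc.2 hxy, coe_rep y⟩, ?_⟩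
  rw [disjoint_left]
  rintro _ ⟨t, ht, rfl⟩ htS
  have hrep : rep t = t := rep_coe ⟨(rep_mem_Ico x).1.trans ht.1, ht.2.trans_lt (rep_mem_Ico y).2⟩
  have hty : t < rep y := ht.2.lt_of_ne fun hty ↦ hy (by rwa [hty, coe_rep] at htS)
  -- the filter defining `gapIndex S y` contains `t` on top of that of `gapIndex S x`
  refine h.not_lt (Finset.card_lt_card ((Finset.ssubset_iff_of_subset ?_).2 ⟨t, ?_, ?_⟩))
  · intro s
    simp only [Finset.mem_filter]
    exact fun ⟨hs, hlt⟩ ↦ ⟨hs, hlt.trans_le hxy⟩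
  · simpa [hrep] using ⟨htS, hty⟩
  · simpa [hrep] using fun _ ↦ ht.1

lemma coverMincard_dist_lt_one_div_le {T : UnitAddCircle → UnitAddCircle} (hT : Continuous T)
    (hTi : Injective T) {k : ℕ} (hk : 0 < k) (n : ℕ) :
    coverMincard T univ {p | dist p.1 p.2 < 1 / k} n ≤ 2 * k * n + 1 := by
  classical
  set U : SetRel UnitAddCircle UnitAddCircle := {p | dist p.1 p.2 < 1 / k}
  have : U.IsRefl := ⟨fun x ↦ by simpa [U] using hk⟩
  let S : Finset UnitAddCircle := (Finset.range n).biUnion fun i ↦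
    (gridPoints k).preimage T^[i] (hTi.iterate i).injOn
  have hS : S.card ≤ k * n := by
    refine (Finset.card_biUnion_le_card_mul _ _ k fun i _ ↦ ?_).trans_eq (by simp [mul_comm])
    rw [Finset.card_preimage]
    exact (Finset.card_filter_le _ _).trans (Finset.card_image_le.trans (by simp))
  have hclose (x y : UnitAddCircle) (hx : x ∉ S) (hy : y ∉ S)
      (hxy : gapIndex S x = gapIndex S y) : x ~[dynEntourage T U n] y := by
    obtain ⟨C, hC, hxC, hyC, hCS⟩ := exists_isPreconnected_of_gapIndex_eq hx hy hxy
    refine prod_subset_dynEntourage_of_isPreconnected hT (D := gridPoints k)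
      (fun C hC hCk ⟨x, y⟩ ⟨hx, hy⟩ ↦ dist_lt_of_isPreconnected hk hC hCk hx hy) hC
      (fun i hi ↦ hCS.mono_right fun z hz ↦ ?_) ⟨hxC, hyC⟩
    simpa [S] using ⟨i, hi, hz⟩
  obtain ⟨s, hs, hcard⟩ := SetRel.exists_finset_isCover_univ_of_fibers S (gapIndex S)
    (fun x _ ↦ gapIndex_lt S x) hclose
  calc coverMincard T univ U n ≤ s.card := IsDynCoverOf.coverMincard_le_card (F := univ) hs
    _ ≤ 2 * k * n + 1 := by norm_cast; linarith

end UnitAddCircle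

/-- Every homeomorphism of the circle `ℝ/ℤ` has zero topological entropy (cover entropy over
the whole space). -/
theorem stmt10 (f : AddCircle (1 : ℝ) ≃ₜ AddCircle (1 : ℝ)) :
    Dynamics.coverEntropy (f : AddCircle (1 : ℝ) → AddCircle (1 : ℝ)) Set.univ = 0 := by
  refine le_antisymm ?_ (coverEntropy_nonneg _ univ_nonempty)
  rw [coverEntropy_eq_iSup_basis Metric.uniformity_basis_dist]
  refine iSup₂_le fun ε hε ↦ ?_
  obtain ⟨k, hk⟩ := exists_nat_one_div_lt hε
  have hsub : {p : UnitAddCircle × UnitAddCircle | dist p.1 p.2 < 1 / (k + 1 : ℕ)} ⊆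
      {p | dist p.1 p.2 < ε} := fun p hp ↦ hp.trans (by exact_mod_cast hk)
  exact (coverEntropyEntourage_antitone _ _ hsub).trans
    (coverEntropyEntourage_nonpos_of_coverMincard_le
      (UnitAddCircle.coverMincard_dist_lt_one_div_le f.continuous f.injective k.succ_pos))
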